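/- In a cocommutative post-Hopf algebra, the subadjacent antipode satisfies the recursion S▷(x) = S▷(x₁) ▷ S(x₂) for all x in H. -/

import Mathlib

/-!
Post-Hopf algebras (Li–Sheng–Tang). We work over a commutative ring `R`.
`Coalgebra.comul (A := H ⊗[R] H)` refers to the standard coalgebra structure
on the tensor product, so that `comul_rhd`/`counit_rhd` say exactly that
`▷ : H ⊗ H → H` is a coalgebra homomorphism.  Sweedler sums such as
`(x₁ ▷ y)·(x₂ ▷ z)` are expressed by applying suitable linear maps to
`Coalgebra.comul x`.
-/

open TensorProduct Coalgebra LinearMap HopfAlgebra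

variable (R H : Type*) [CommRing R] [Ring H] [HopfAlgebra R H]

/-- The subadjacent product `x *▷ y = x₁ · (x₂ ▷ y)` as a linear map
`H ⊗ H → H`, built from a binary operation `rhd : H ⊗ H →ₗ H`. -/
noncomputable def subProd (rhd : H ⊗[R] H →ₗ[R] H) : H ⊗[R] H →ₗ[R] H :=
  LinearMap.mul' R H ∘ₗ TensorProduct.map LinearMap.id rhd
    ∘ₗ (TensorProduct.assoc R H H H).toLinearMap
    ∘ₗ TensorProduct.map Coalgebra.comul LinearMap.id

/-- Convolution product on `Hom(H, End(H))`: `(f * g)(x) = f(x₁) ∘ g(x₂)`. -/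
noncomputable def convEnd (f g : H →ₗ[R] Module.End R H) : H →ₗ[R] Module.End R H :=
  LinearMap.mul' R (Module.End R H) ∘ₗ TensorProduct.map f g ∘ₗ Coalgebra.comul

/-- The unit `x ↦ ε(x)·id` of the convolution algebra `Hom(H, End(H))`. -/
noncomputable def convUnit : H →ₗ[R] Module.End R H :=
  Algebra.linearMap R (Module.End R H) ∘ₗ Coalgebra.counit

/-- A post-Hopf algebra structure on the Hopf algebra `H`: a coalgebra
homomorphism `▷ : H ⊗ H → H` satisfying
`x ▷ (y·z) = (x₁ ▷ y)·(x₂ ▷ z)`, `x ▷ (y ▷ z) = (x₁·(x₂ ▷ y)) ▷ z`, and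
such that `α : H → End H`, `α_x = x ▷ -`, is convolution invertible. -/
structure PostHopf : Type _ where
  /-- the binary operation `▷` -/
  rhd : H ⊗[R] H →ₗ[R] H
  /-- `▷` is comultiplicative -/
  comul_rhd : Coalgebra.comul ∘ₗ rhd
      = TensorProduct.map rhd rhd ∘ₗ (Coalgebra.comul (R := R) (A := H ⊗[R] H))
  /-- `▷` is counital -/
  counit_rhd : Coalgebra.counit ∘ₗ rhd = (Coalgebra.counit (R := R) (A := H ⊗[R] H))
  /-- `x ▷ (y·z) = (x₁ ▷ y)·(x₂ ▷ z)` -/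
  rhd_mul : ∀ x y z : H,
    rhd (x ⊗ₜ (y * z))
      = LinearMap.mul' R H
          (TensorProduct.map (rhd ∘ₗ (TensorProduct.mk R H H).flip y)
            (rhd ∘ₗ (TensorProduct.mk R H H).flip z) (Coalgebra.comul x))
  /-- `x ▷ (y ▷ z) = (x₁·(x₂ ▷ y)) ▷ z` -/
  rhd_rhd : ∀ x y z : H,
    rhd (x ⊗ₜ rhd (y ⊗ₜ z)) = rhd (subProd R H rhd (x ⊗ₜ y) ⊗ₜ z)
  /-- `α : x ↦ (x ▷ -)` is convolution invertible in `Hom(H, End H)` -/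
  conv_invertible : ∃ β : H →ₗ[R] Module.End R H,
    convEnd R H ((TensorProduct.mk R H H).compr₂ rhd) β = convUnit R H ∧
    convEnd R H β ((TensorProduct.mk R H H).compr₂ rhd) = convUnit R H

/-- Cocommutativity of the coalgebra `H`. -/
def IsCocomm : Prop :=
  ∀ x : H, (TensorProduct.comm R H H) (Coalgebra.comul x) = Coalgebra.comul x

/-- The subadjacent antipode `S▷(x) = β_{x₁}(S(x₂))`, built from a
convolution inverse `β` of the left multiplication. -/
noncomputable def subAntipode (β : H →ₗ[R] Module.End R H) : H →ₗ[R] H :=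
  TensorProduct.lift (β.compl₂ (HopfAlgebra.antipode (R := R) (A := H)))
    ∘ₗ Coalgebra.comul

/-- An element is primitive if `Δ(x) = 1 ⊗ x + x ⊗ 1`. -/
def IsPrimitive (x : H) : Prop :=
  Coalgebra.comul (R := R) x = (1 : H) ⊗ₜ x + x ⊗ₜ (1 : H)

/-!
Write `α_x = (x ▷ -)` and let the convolution algebra `Hom(H, End H)` act on `Hom(H, H)` by
`(f · T)(x) = f(x₁)(T x₂)`, so that `S▷ = β · S`. Then `α · S▷ = (α ⋆ β) · S = S`, that is
`x₁ ▷ S▷(x₂) = S(x)`, hence `x₁ *▷ S▷(x₂) = x₁ S(x₂) = ε(x) 1`. As `α` turns `*▷` into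
composition and `α₁ = id`, the map `α ∘ S▷` is a right convolution inverse of `α`, so it equals
the left inverse `β`, and `S▷(x) = β_{x₁}(S x₂) = S▷(x₁) ▷ S(x₂)`.
-/

open WithConv

section ConvAct

variable {R C M : Type*} [CommSemiring R] [AddCommMonoid C] [Module R C] [Coalgebra R C]
  [AddCommMonoid M] [Module R M]

/-- `convAct f T` is `x ↦ f(x₁)(T x₂)`, the action of the convolution algebra `C → End M`
on `C → M`. -/
def convAct (f : C →ₗ[R] Module.End R M) (T : C →ₗ[R] M) : C →ₗ[R] M :=
  TensorProduct.lift (f.compl₂ T) ∘ₗ comul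

lemma convAct_mul (f g : WithConv (C →ₗ[R] Module.End R M)) (T : C →ₗ[R] M) :
    convAct (f * g).ofConv T = convAct f.ofConv (convAct g.ofConv T) := by
  unfold convAct
  -- both sides are `x ↦ f x₁ (g x₂ (T x₃))`, bracketed differently
  set Ψ := TensorProduct.lift (f.ofConv.compl₂ (TensorProduct.lift (g.ofConv.compl₂ T)))
  have hL : TensorProduct.lift ((f * g).ofConv.compl₂ T)
      = Ψ ∘ₗ (TensorProduct.assoc R C C C).toLinearMap ∘ₗ comul.rTensor C := by
    refine TensorProduct.ext' fun a c => ?_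
    suffices ∀ t : C ⊗[R] C, LinearMap.mul' R (Module.End R M)
        (TensorProduct.map f.ofConv g.ofConv t) (T c) = Ψ (TensorProduct.assoc R C C C (t ⊗ₜ c))
      from this _
    intro t
    induction t using TensorProduct.induction_on with
    | zero => simp
    | tmul x y => simp [Ψ]
    | add x y hx hy => simp_all [TensorProduct.add_tmul]
  have hR : TensorProduct.lift (f.ofConv.compl₂ (TensorProduct.lift (g.ofConv.compl₂ T) ∘ₗ comul))
      = Ψ ∘ₗ comul.lTensor C :=
    TensorProduct.ext' fun a c => by simp [Ψ]
  rw [hL, hR]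
  simp only [LinearMap.comp_assoc, Coalgebra.coassoc]

lemma convAct_one (T : C →ₗ[R] M) :
    convAct (1 : WithConv (C →ₗ[R] Module.End R M)).ofConv T = T := by
  have h : TensorProduct.lift ((1 : WithConv (C →ₗ[R] Module.End R M)).ofConv.compl₂ T)
      = T ∘ₗ (TensorProduct.lid R C).toLinearMap ∘ₗ counit.rTensor C :=
    TensorProduct.ext' fun a c => by simp [LinearMap.convOne_def]
  ext x
  simp [convAct, h]

end ConvAct

lemma LinearMap.convMul_apply_of_isGroupLikeElem {R C A : Type*} [CommSemiring R]
    [AddCommMonoid C] [Module R C] [Coalgebra R C] [Semiring A] [Algebra R A] {c : C}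
    (hc : IsGroupLikeElem R c) (f g : C →ₗ[R] A) : (toConv f * toConv g) c = f c * g c := by
  simp [hc.comul_eq_tmul_self]

namespace PostHopf

variable {R H} (P : PostHopf R H)

/-- The map `α : x ↦ (x ▷ -)`. -/
def rhdLeft : H →ₗ[R] Module.End R H := (TensorProduct.mk R H H).compr₂ P.rhd

def rhdCoalgHom : H ⊗[R] H →ₗc[R] H where
  toLinearMap := P.rhd
  counit_comp := P.counit_rhd
  map_comp_comul := P.comul_rhd.symm

lemma rhd_one_tmul_one : P.rhd (1 ⊗ₜ 1) = 1 := by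
  have hg : IsGroupLikeElem R (P.rhd 1) := IsGroupLikeElem.one.map P.rhdCoalgHom
  refine (IsIdempotentElem.iff_eq_one_of_isUnit hg.isUnit).1 ?_
  simpa [IsIdempotentElem, Bialgebra.comul_one, Algebra.TensorProduct.one_def] using
    (P.rhd_mul 1 1 1).symm

lemma subProd_one_tmul_one : subProd R H P.rhd (1 ⊗ₜ 1) = 1 := by
  simp [subProd, Bialgebra.comul_one, Algebra.TensorProduct.one_def, rhd_one_tmul_one]

lemma rhdLeft_mul (u v : H) :
    P.rhdLeft u * P.rhdLeft v = P.rhdLeft (subProd R H P.rhd (u ⊗ₜ v)) :=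
  LinearMap.ext fun z => P.rhd_rhd u v z

lemma convAct_rhdLeft_comp (T U : H →ₗ[R] H) :
    convAct (P.rhdLeft ∘ₗ T) U = P.rhd ∘ₗ TensorProduct.map T U ∘ₗ comul := by
  rw [convAct, ← LinearMap.comp_assoc]
  congr 1
  exact TensorProduct.ext' fun a b => rfl

lemma convAct_rhdLeft (T : H →ₗ[R] H) :
    convAct P.rhdLeft T = P.rhd ∘ₗ T.lTensor H ∘ₗ comul :=
  P.convAct_rhdLeft_comp LinearMap.id T

lemma subProd_comp_lTensor_comp_comul (T : H →ₗ[R] H) :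
    subProd R H P.rhd ∘ₗ T.lTensor H ∘ₗ comul
      = (toConv LinearMap.id * toConv (convAct P.rhdLeft T)).ofConv := by
  simp [subProd, convAct_rhdLeft, LinearMap.convMul_def, coassoc_simps]

lemma rhdLeft_convMul_rhdLeft_comp (T : H →ₗ[R] H) :
    toConv P.rhdLeft * toConv (P.rhdLeft ∘ₗ T)
      = toConv (P.rhdLeft ∘ₗ subProd R H P.rhd ∘ₗ T.lTensor H ∘ₗ comul) := by
  have hmul : LinearMap.mul' R (Module.End R H) ∘ₗ TensorProduct.map P.rhdLeft P.rhdLeft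
      = P.rhdLeft ∘ₗ subProd R H P.rhd :=
    TensorProduct.ext' P.rhdLeft_mul
  rw [LinearMap.convMul_def, ofConv_toConv, ofConv_toConv, ← LinearMap.map_comp_lTensor]
  simp only [← LinearMap.comp_assoc, hmul]

variable {β : H →ₗ[R] Module.End R H}

lemma rhdLeft_one (h₁ : toConv P.rhdLeft * toConv β = 1)
    (h₂ : toConv β * toConv P.rhdLeft = 1) : P.rhdLeft 1 = 1 := by
  have hg : IsGroupLikeElem R (1 : H) := .one
  have hunit : IsUnit (P.rhdLeft 1) := by
    refine ⟨⟨P.rhdLeft 1, β 1, ?_, ?_⟩, rfl⟩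
    · simp [← LinearMap.convMul_apply_of_isGroupLikeElem hg, h₁]
    · simp [← LinearMap.convMul_apply_of_isGroupLikeElem hg, h₂]
  refine (IsIdempotentElem.iff_eq_one_of_isUnit hunit).1 ?_
  rw [IsIdempotentElem, rhdLeft_mul, subProd_one_tmul_one]

lemma convAct_rhdLeft_subAntipode (h₁ : toConv P.rhdLeft * toConv β = 1) :
    convAct P.rhdLeft (subAntipode R H β) = antipode R :=
  calc convAct P.rhdLeft (subAntipode R H β)
      = convAct (toConv P.rhdLeft * toConv β).ofConv (antipode R) := (convAct_mul _ _ _).symm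
    _ = antipode R := by rw [h₁, convAct_one]

lemma rhdLeft_convMul_rhdLeft_comp_subAntipode (h₁ : toConv P.rhdLeft * toConv β = 1)
    (h₂ : toConv β * toConv P.rhdLeft = 1) :
    toConv P.rhdLeft * toConv (P.rhdLeft ∘ₗ subAntipode R H β) = 1 := by
  rw [rhdLeft_convMul_rhdLeft_comp, subProd_comp_lTensor_comp_comul,
    P.convAct_rhdLeft_subAntipode h₁, LinearMap.id_mul_antipode]
  ext x : 2
  simp only [LinearMap.convOne_def, ofConv_toConv, LinearMap.comp_apply, Algebra.linearMap_apply,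
    Algebra.algebraMap_eq_smul_one, map_smul, rhdLeft_one P h₁ h₂]

end PostHopf

theorem subAntipode_recursion (P : PostHopf R H)
    (β : H →ₗ[R] Module.End R H)
    (hβ₁ : convEnd R H ((TensorProduct.mk R H H).compr₂ P.rhd) β = convUnit R H)
    (hβ₂ : convEnd R H β ((TensorProduct.mk R H H).compr₂ P.rhd) = convUnit R H)
    (x : H) :
    subAntipode R H β x
      = P.rhd (TensorProduct.map (subAntipode R H β)
          (HopfAlgebra.antipode (R := R) (A := H)) (Coalgebra.comul x)) := by
  have h₁ : toConv P.rhdLeft * toConv β = 1 := WithConv.ext hβ₁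
  have h₂ : toConv β * toConv P.rhdLeft = 1 := WithConv.ext hβ₂
  have hβ : β = P.rhdLeft ∘ₗ subAntipode R H β := congr(ofConv
    $(left_inv_eq_right_inv h₂ (P.rhdLeft_convMul_rhdLeft_comp_subAntipode h₁ h₂)))
  calc subAntipode R H β x = convAct β (antipode R) x := rfl
    _ = convAct (P.rhdLeft ∘ₗ subAntipode R H β) (antipode R) x := by rw [← hβ]
    _ = _ := by rw [P.convAct_rhdLeft_comp]; rfl
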